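/- Let 0 < μ < 1, c > 0, λ = 1/2 + √(c+1/4), and c(n) = λμ^{2n} − λ²μ^{4n} + c. Define operators on ℓ²(ℕ) by A e_n = λ μ^{2n} e_n and B e_n = c(n)^{1/2} e_{n−1} (with e_{−1} = 0), so B* e_n = c(n+1)^{1/2} e_{n+1}. Then these operators are bounded and satisfy the Podleś sphere relations: A is self-adjoint, A B = μ^{-2} B A, B*B = A − A² + c·I, and B B* = μ² A − μ⁴ A² + c·I. -/

import Mathlib

/-- λ₊ = 1/2 + √(c+1/4) -/
noncomputable def lamP (c : ℝ) : ℝ := 1/2 + Real.sqrt (c + 1/4)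

/-- c₊(n) = λμ^{2n} − (λμ^{2n})² + c -/
noncomputable def cP (c μ : ℝ) (n : ℕ) : ℝ := lamP c * μ ^ (2 * n) - (lamP c * μ ^ (2 * n)) ^ 2 + c

/-!
`A` is the diagonal operator with eigenvalues `a n = λμ^{2n}` and `B` the weighted backward shift
with weights `√c(n+1)`. Both are conjugates, through `e.repr : H ≃ ℓ²(ℕ)`, of weighted composition
operators `x ↦ (w n • x (f n))ₙ` with `f` injective and `w` bounded, which are bounded on `ℓᵖ`.
The adjoint of such an operator is computed on the basis, and every relation is then checked on
`e n`: `B*B` and `BB*` act there by `c(n)` and `c(n+1)` (using `c(0) = 0`, i.e. `λ² = λ + c`), and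
`c(n) = a n - a n² + c`, `c(n+1) = μ² a n - μ⁴ a n² + c`, `a (n+1) = μ² a n`.
-/
open scoped ENNReal ComplexConjugate InnerProductSpace
open Function

namespace lp

variable {ι 𝕜 E : Type*} [NormedField 𝕜] [NormedAddCommGroup E] [NormedSpace 𝕜 E] {p : ℝ≥0∞}

theorem sum_rpow_comp_le_norm_rpow (hp : 0 < p.toReal) (x : lp (fun _ : ι => E) p) {f : ι → ι}
    (hf : Injective f) (s : Finset ι) :
    ∑ i ∈ s, ‖x (f i)‖ ^ p.toReal ≤ ‖x‖ ^ p.toReal := by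
  simpa using sum_rpow_le_norm_rpow hp x (s.map ⟨f, hf⟩)

theorem sum_rpow_smul_comp_le (hp : 0 < p.toReal) (x : lp (fun _ : ι => E) p)
    {w : ι → 𝕜} {C : ℝ} (hC : 0 ≤ C) (hw : ∀ i, ‖w i‖ ≤ C) {f : ι → ι} (hf : Injective f)
    (s : Finset ι) :
    ∑ i ∈ s, ‖w i • x (f i)‖ ^ p.toReal ≤ (C * ‖x‖) ^ p.toReal := by
  calc ∑ i ∈ s, ‖w i • x (f i)‖ ^ p.toReal
      ≤ ∑ i ∈ s, C ^ p.toReal * ‖x (f i)‖ ^ p.toReal := by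
        gcongr with i
        rw [norm_smul, Real.mul_rpow (norm_nonneg _) (norm_nonneg _)]
        gcongr
        exact hw i
    _ = C ^ p.toReal * ∑ i ∈ s, ‖x (f i)‖ ^ p.toReal := Finset.mul_sum .. |>.symm
    _ ≤ C ^ p.toReal * ‖x‖ ^ p.toReal := by gcongr; exact sum_rpow_comp_le_norm_rpow hp x hf s
    _ = (C * ‖x‖) ^ p.toReal := (Real.mul_rpow hC (norm_nonneg' x)).symm

variable [Fact (1 ≤ p)]

noncomputable def weightedComp (hp : p ≠ ∞) (w : ι → 𝕜) {f : ι → ι} (hf : Injective f) {C : ℝ}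
    (hC : 0 ≤ C) (hw : ∀ i, ‖w i‖ ≤ C) : lp (fun _ : ι => E) p →L[𝕜] lp (fun _ : ι => E) p :=
  have hp' : 0 < p.toReal := ENNReal.toReal_pos (zero_lt_one.trans_le Fact.out).ne' hp
  LinearMap.mkContinuous
    { toFun x := ⟨fun i => w i • x (f i), memℓp_gen' (sum_rpow_smul_comp_le hp' x hC hw hf)⟩
      map_add' x y := by ext i; exact smul_add ..
      map_smul' a x := by ext i; exact smul_comm .. }
    C fun x => norm_le_of_forall_sum_le hp' (by positivity) (sum_rpow_smul_comp_le hp' x hC hw hf)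

@[simp]
theorem weightedComp_apply (hp : p ≠ ∞) (w : ι → 𝕜) {f : ι → ι} (hf : Injective f) {C : ℝ}
    (hC : 0 ≤ C) (hw : ∀ i, ‖w i‖ ≤ C) (x : lp (fun _ : ι => E) p) (i : ι) :
    weightedComp hp w hf hC hw x i = w i • x (f i) :=
  rfl

end lp

namespace HilbertBasis

section

variable {ι 𝕜 H : Type*} [RCLike 𝕜] [NormedAddCommGroup H] [InnerProductSpace 𝕜 H]
  (b : HilbertBasis ι 𝕜 H)

theorem ext_inner {x y : H} (h : ∀ i, ⟪b i, x⟫_𝕜 = ⟪b i, y⟫_𝕜) : x = y :=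
  b.repr.injective <| lp.ext <| funext fun i => by
    simp only [b.repr_apply_apply, h]

theorem continuousLinearMap_ext {F : Type*} [TopologicalSpace F] [AddCommMonoid F] [Module 𝕜 F]
    [T2Space F] {T S : H →L[𝕜] F} (h : ∀ i, T (b i) = S (b i)) : T = S := by
  refine ContinuousLinearMap.ext_on ?_ (Set.forall_mem_range.2 h)
  simp [← Submodule.topologicalClosure_coe, dense_iff_closure_eq, b.dense_span]

theorem exists_apply_comp_eq_smul {w : ι → 𝕜} (hw : BddAbove (Set.range fun i => ‖w i‖))
    {f : ι → ι} (hf : Injective f) :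
    ∃ T : H →L[𝕜] H, (∀ i, T (b (f i)) = w i • b i) ∧ ∀ j ∉ Set.range f, T (b j) = 0 := by
  classical
  obtain ⟨C, hC⟩ := hw
  let W := lp.weightedComp (E := 𝕜) (p := 2) ENNReal.ofNat_ne_top w hf (le_max_right C 0)
    fun i => le_max_of_le_left (hC ⟨i, rfl⟩)
  refine ⟨b.repr.symm.toContinuousLinearEquiv ∘L W ∘L b.repr.toContinuousLinearEquiv, ?_, ?_⟩
  · intro k
    apply b.repr.injective
    ext i
    by_cases hik : i = k <;> simp [W, b.repr_self, lp.single_apply, hf.eq_iff, hik]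
  · intro j hj
    simp only [Set.mem_range, not_exists] at hj
    apply b.repr.injective
    ext i
    simp [W, b.repr_self, lp.single_apply, hj]

theorem adjoint_apply_of_apply_comp_eq_smul [CompleteSpace H] {T : H →L[𝕜] H} {w : ι → 𝕜}
    {f : ι → ι} (hf : Injective f) (hT : ∀ i, T (b (f i)) = w i • b i)
    (hT₀ : ∀ j ∉ Set.range f, T (b j) = 0) (i : ι) :
    T.adjoint (b i) = conj (w i) • b (f i) := by
  classical
  have hb := orthonormal_iff_ite.mp b.orthonormal
  refine b.ext_inner fun j => ?_
  rw [ContinuousLinearMap.adjoint_inner_right, inner_smul_right, hb]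
  by_cases hj : j ∈ Set.range f
  · obtain ⟨k, rfl⟩ := hj
    rw [hT, inner_smul_left, hb, hf.eq_iff]
    split_ifs with hki <;> simp [hki]
  · rw [hT₀ j hj, inner_zero_left, if_neg (fun h => hj ⟨i, h.symm⟩), mul_zero]

theorem isSelfAdjoint_of_apply_eq_smul [CompleteSpace H] {T : H →L[𝕜] H} {a : ι → ℝ}
    (hT : ∀ i, T (b i) = (a i : 𝕜) • b i) : IsSelfAdjoint T := by
  have h := b.adjoint_apply_of_apply_comp_eq_smul injective_id hT (by simp)
  exact T.isSelfAdjoint_iff'.2 <| b.continuousLinearMap_ext fun i => by simp [h, hT]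

end

section

variable {H : Type*} [NormedAddCommGroup H] [InnerProductSpace ℂ H] (e : HilbertBasis ℕ ℂ H)
  {A B : H →L[ℂ] H}

theorem comp_eq_inv_smul_comp_of_apply_succ {a b : ℕ → ℂ} {q : ℂ} (hq : q ≠ 0)
    (ha : ∀ n, a (n + 1) = q * a n) (hA : ∀ n, A (e n) = a n • e n) (hB₀ : B (e 0) = 0)
    (hB : ∀ n, B (e (n + 1)) = b n • e n) :
    A ∘L B = q⁻¹ • (B ∘L A) := by
  refine e.continuousLinearMap_ext fun n => ?_
  cases n with
  | zero => simp [hA, hB₀]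
  | succ n =>
    simp only [ContinuousLinearMap.comp_apply, smul_apply, hA, hB, map_smul,
      smul_smul, ha]
    congr 1
    field_simp

theorem adjoint_comp_apply_of_apply_succ [CompleteSpace H] {s : ℕ → ℝ} (hs : ∀ n, 0 ≤ s n)
    (hs₀ : s 0 = 0) (hB₀ : B (e 0) = 0) (hB : ∀ n, B (e (n + 1)) = (√(s (n + 1)) : ℂ) • e n)
    (hB' : ∀ n, B.adjoint (e n) = (√(s (n + 1)) : ℂ) • e (n + 1)) (n : ℕ) :
    (B.adjoint ∘L B) (e n) = (s n : ℂ) • e n := by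
  cases n with
  | zero => simp [hB₀, hs₀]
  | succ n =>
    rw [ContinuousLinearMap.comp_apply, hB, map_smul, hB', smul_smul, ← Complex.ofReal_mul,
      Real.mul_self_sqrt (hs _)]

theorem comp_adjoint_apply_of_apply_succ [CompleteSpace H] {s : ℕ → ℝ} (hs : ∀ n, 0 ≤ s n)
    (hB : ∀ n, B (e (n + 1)) = (√(s (n + 1)) : ℂ) • e n)
    (hB' : ∀ n, B.adjoint (e n) = (√(s (n + 1)) : ℂ) • e (n + 1)) (n : ℕ) :
    (B ∘L B.adjoint) (e n) = (s (n + 1) : ℂ) • e n := by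
  rw [ContinuousLinearMap.comp_apply, hB', map_smul, hB, smul_smul, ← Complex.ofReal_mul,
    Real.mul_self_sqrt (hs _)]

end

end HilbertBasis

theorem lamP_nonneg (c : ℝ) : 0 ≤ lamP c := by
  unfold lamP
  positivity

theorem norm_lamP_mul_pow_le (c : ℝ) {μ : ℝ} (hμ : |μ| ≤ 1) (n : ℕ) :
    ‖lamP c * μ ^ (2 * n)‖ ≤ lamP c := by
  rw [norm_mul, norm_pow, Real.norm_of_nonneg (lamP_nonneg c)]
  exact mul_le_of_le_one_right (lamP_nonneg c) (pow_le_one₀ (norm_nonneg μ) hμ)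

theorem lamP_sq {c : ℝ} (hc : -1 / 4 ≤ c) : lamP c ^ 2 = lamP c + c := by
  have := Real.sq_sqrt (show 0 ≤ c + 1 / 4 by linarith)
  unfold lamP
  linear_combination this

theorem cP_zero {c : ℝ} (hc : -1 / 4 ≤ c) (μ : ℝ) : cP c μ 0 = 0 := by
  simp only [cP, mul_zero, pow_zero, mul_one]
  linear_combination -lamP_sq hc

theorem cP_nonneg {c μ : ℝ} (hc : 0 ≤ c) (hμ : |μ| ≤ 1) (n : ℕ) : 0 ≤ cP c μ n := by
  have ht₀ : 0 ≤ μ ^ (2 * n) := (even_two_mul n).pow_nonneg μ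
  have ht₁ : μ ^ (2 * n) ≤ 1 := by
    rw [pow_mul]; exact pow_le_one₀ (sq_nonneg μ) (sq_le_one_iff_abs_le_one μ |>.2 hμ)
  set t := μ ^ (2 * n)
  have hsplit : cP c μ n = lamP c * t * (1 - t) + c * (1 - t ^ 2) := by
    unfold cP; linear_combination (-t ^ 2) * lamP_sq (by linarith : -1 / 4 ≤ c)
  have ht₂ : t ^ 2 ≤ 1 := pow_le_one₀ ht₀ ht₁
  rw [hsplit]
  exact add_nonneg (mul_nonneg (mul_nonneg (lamP_nonneg c) ht₀) (by linarith))
    (mul_nonneg hc (by linarith))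

theorem cP_le (c μ : ℝ) (n : ℕ) : cP c μ n ≤ c + 1 / 4 := by
  unfold cP
  nlinarith [sq_nonneg (lamP c * μ ^ (2 * n) - 1 / 2)]

theorem podles_representation_exists
    {H : Type*} [NormedAddCommGroup H] [InnerProductSpace ℂ H] [CompleteSpace H]
    (e : HilbertBasis ℕ ℂ H) (μ c : ℝ) (hc : 0 < c) (hμ0 : 0 < μ) (hμ1 : μ < 1) :
    ∃ A B : H →L[ℂ] H,
      (∀ n : ℕ, A (e n) = ((lamP c * μ ^ (2 * n) : ℝ) : ℂ) • e n) ∧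
      B (e 0) = 0 ∧
      (∀ n : ℕ, B (e (n + 1)) = ((Real.sqrt (cP c μ (n + 1)) : ℝ) : ℂ) • e n) ∧
      (∀ n : ℕ, (ContinuousLinearMap.adjoint B) (e n)
          = ((Real.sqrt (cP c μ (n + 1)) : ℝ) : ℂ) • e (n + 1)) ∧
      IsSelfAdjoint A ∧
      A ∘L B = ((μ : ℂ) ^ 2)⁻¹ • (B ∘L A) ∧
      (ContinuousLinearMap.adjoint B) ∘L B = A - A ∘L A + (c : ℂ) • 1 ∧
      B ∘L (ContinuousLinearMap.adjoint B)
        = (μ : ℂ) ^ 2 • A - (μ : ℂ) ^ 4 • (A ∘L A) + (c : ℂ) • 1 := by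
  have hμ : |μ| ≤ 1 := abs_le.2 ⟨by linarith, hμ1.le⟩
  have ha : BddAbove (Set.range fun n : ℕ => ‖((lamP c * μ ^ (2 * n) : ℝ) : ℂ)‖) :=
    ⟨lamP c, Set.forall_mem_range.2 fun n => by simpa using norm_lamP_mul_pow_le c hμ n⟩
  have hb : BddAbove (Set.range fun n : ℕ => ‖((√(cP c μ (n + 1)) : ℝ) : ℂ)‖) :=
    ⟨√(c + 1 / 4), Set.forall_mem_range.2 fun n => by
      simpa [abs_of_nonneg (Real.sqrt_nonneg _)] using Real.sqrt_le_sqrt (cP_le c μ (n + 1))⟩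
  obtain ⟨A, hA, -⟩ := e.exists_apply_comp_eq_smul ha injective_id
  replace hA : ∀ n, A (e n) = ((lamP c * μ ^ (2 * n) : ℝ) : ℂ) • e n := hA
  obtain ⟨B, hB, hB₀⟩ := e.exists_apply_comp_eq_smul hb Nat.succ_injective
  have hB' := e.adjoint_apply_of_apply_comp_eq_smul Nat.succ_injective hB hB₀
  simp only [Complex.conj_ofReal] at hB'
  replace hB₀ : B (e 0) = 0 := hB₀ 0 (by simp)
  have hs := cP_nonneg hc.le hμ
  refine ⟨A, B, hA, hB₀, hB, hB', e.isSelfAdjoint_of_apply_eq_smul hA,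
    e.comp_eq_inv_smul_comp_of_apply_succ (by simp [hμ0.ne']) (fun n => by push_cast; ring)
      hA hB₀ hB,
    e.continuousLinearMap_ext fun n => ?_, e.continuousLinearMap_ext fun n => ?_⟩
  · rw [e.adjoint_comp_apply_of_apply_succ hs (cP_zero (by linarith) μ) hB₀ hB hB' n]
    simp only [add_apply, sub_apply, smul_apply, ContinuousLinearMap.comp_apply,
      one_apply_eq_self, hA, map_smul, cP]
    push_cast
    module
  · rw [e.comp_adjoint_apply_of_apply_succ hs hB hB' n]
    simp only [add_apply, sub_apply, smul_apply, ContinuousLinearMap.comp_apply,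
      one_apply_eq_self, hA, map_smul, cP]
    push_cast
    module
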